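/- Let W₂ be the set of pairs (u,v) ∈ M not top-reducible by G with val(v) minimal equal to ν and LM(u) minimal among such pairs. Then any two elements (u_1,v_1), (u_2,v_2) of W₂ satisfy LM(v_1) = LM(v_2). -/

import Mathlib

/-!
Let `(u₁, v₁), (u₂, v₂) ∈ W₂`. Neither `u`-part vanishes (otherwise the `v`-part lies in `I₀`
and is top-reducible by the Gröbner basis of `I₀`), so minimality makes `LM(u₁) = LM(u₂)`.
If, say, `LM(v₁) < LM(v₂)`, subtract the unit multiple of `(u₂, v₂)` that cancels the leading
term of `u₁`: the result `(u, w) ∈ M` has `LM(w) = LM(v₂)` and `LM(u) < LM(u₂)`. Now keep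
top-reducing `u`. A reduction by some `(q, 0) ∈ G` preserves `w` and lowers `LM(u)`; a
reduction through the `v`-part would also top-reduce `(u₂, v₂)`; an irreducible pair would lie
in `W₁` below `LM(u₂)`. The descent ends once `val(u) > ν`, and then `w - u f ∈ I₀` has leading
monomial `LM(v₂)`, so `(u₂, v₂)` is top-reducible after all. Since `val(LM(u)) ≤ ν` along the
way, the descent is well founded.
-/

open MvPowerSeries

namespace TateStmt

variable {n : ℕ} {O : Type*} [CommRing O]

/-- The Tate condition: the (π-adic) valuations of the coefficients tend to infinity. -/
def IsTate (π : O) (f : MvPowerSeries (Fin n) O) : Prop :=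
  ∀ N : ℕ, {i : Fin n →₀ ℕ | ¬ π ^ N ∣ MvPowerSeries.coeff i f}.Finite

/-- The integral Tate algebra `K{X}°`, as a subring of the ring of formal power series
over the valuation ring `O = K°`. -/
def TateAlgebra (n : ℕ) (O : Type*) [CommRing O] (π : O) :
    Subring (MvPowerSeries (Fin n) O) where
  carrier := {f | IsTate π f}
  zero_mem' := by
    intro N
    apply Set.Finite.subset (Set.finite_empty)
    intro i hi
    exact hi (Dvd.intro 0 (by simp))
  one_mem' := by
    intro N
    apply Set.Finite.subset (Set.finite_singleton (0 : Fin n →₀ ℕ))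
    intro i hi
    by_contra h
    rw [Set.mem_singleton_iff] at h
    apply hi
    rw [MvPowerSeries.coeff_one, if_neg h]
    exact Dvd.intro 0 (by simp)
  add_mem' := by
    intro f g hf hg N
    apply Set.Finite.subset ((hf N).union (hg N))
    intro i hi
    by_contra h
    simp only [Set.mem_union, Set.mem_setOf_eq, not_or, not_not] at h
    exact hi (by rw [map_add]; exact dvd_add h.1 h.2)
  neg_mem' := by
    intro f hf N
    apply Set.Finite.subset (hf N)
    intro i hi
    by_contra h
    simp only [Set.mem_setOf_eq, not_not] at h
    exact hi (by rw [map_neg]; exact (dvd_neg).mpr h)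
  mul_mem' := by
    intro f g hf hg N
    apply Set.Finite.subset (Set.Finite.add (hf N) (hg N))
    intro i hi
    by_contra h
    apply hi
    rw [MvPowerSeries.coeff_mul]
    apply Finset.dvd_sum
    intro p hp
    rw [Finset.HasAntidiagonal.mem_antidiagonal] at hp
    by_cases h1 : π ^ N ∣ MvPowerSeries.coeff p.1 f
    · exact Dvd.dvd.mul_right h1 _
    · by_cases h2 : π ^ N ∣ MvPowerSeries.coeff p.2 g
      · exact Dvd.dvd.mul_left h2 _
      · exact absurd (hp ▸ Set.add_mem_add h1 h2) h

/-- Tate monomials `π^a X^i`, identified with pairs `(a, i) ∈ ℕ × ℕ^n`. -/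
abbrev TMon (n : ℕ) := ℕ × (Fin n →₀ ℕ)

noncomputable def monMul (a b : TMon n) : TMon n := (a.1 + b.1, a.2 + b.2)
def monDvd (a b : TMon n) : Prop := a.1 ≤ b.1 ∧ a.2 ≤ b.2
noncomputable def monDiv (a b : TMon n) : TMon n := (a.1 - b.1, a.2 - b.2)
noncomputable def monLcm (a b : TMon n) : TMon n := (max a.1 b.1, a.2 ⊔ b.2)

/-- The valuation-first term order: compare valuations first (a *smaller* valuation gives a
*larger* term), then exponents via the monomial order `mo`. -/
def termLT (mo : MonomialOrder (Fin n)) (a b : TMon n) : Prop :=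
  b.1 < a.1 ∨ (a.1 = b.1 ∧ mo.toSyn a.2 < mo.toSyn b.2)

def termLE (mo : MonomialOrder (Fin n)) (a b : TMon n) : Prop :=
  a = b ∨ termLT mo a b

/-- Order on `Option (TMon n)`, where `none` (the "monomial" of `0`) is smallest. -/
def optLT (mo : MonomialOrder (Fin n)) : Option (TMon n) → Option (TMon n) → Prop
  | none, none => False
  | none, some _ => True
  | some _, none => False
  | some a, some b => termLT mo a b

def optLE (mo : MonomialOrder (Fin n)) (a b : Option (TMon n)) : Prop :=
  a = b ∨ optLT mo a b

noncomputable def optMul (t : TMon n) : Option (TMon n) → Option (TMon n)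
  | none => none
  | some a => some (monMul t a)

/-- `(a, i)` is (the monomial of) a term of `f`: the coefficient of `X^i` has valuation
exactly `a`. -/
def IsTerm (π : O) (f : MvPowerSeries (Fin n) O) (m : TMon n) : Prop :=
  π ^ m.1 ∣ MvPowerSeries.coeff m.2 f ∧ ¬ π ^ (m.1 + 1) ∣ MvPowerSeries.coeff m.2 f

/-- `m` is the leading monomial of `f`. -/
def IsLM (π : O) (mo : MonomialOrder (Fin n)) (f : MvPowerSeries (Fin n) O) (m : TMon n) :
    Prop :=
  IsTerm π f m ∧ ∀ m', IsTerm π f m' → termLE mo m' m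

/-- `s` is the leading monomial of `f`, with the convention `LM 0 = none`. -/
def IsLMopt (π : O) (mo : MonomialOrder (Fin n)) (f : MvPowerSeries (Fin n) O) :
    Option (TMon n) → Prop
  | none => f = 0
  | some m => IsLM π mo f m

/-- All coefficients of `f` are divisible by `π^N`, i.e. `val f ≥ N`. -/
def DvdAll (π : O) (N : ℕ) (f : MvPowerSeries (Fin n) O) : Prop :=
  ∀ i, π ^ N ∣ MvPowerSeries.coeff i f

/-- The Gauss valuation of `f` is exactly `N`. -/
def ValEq (π : O) (f : MvPowerSeries (Fin n) O) (N : ℕ) : Prop :=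
  DvdAll π N f ∧ ¬ DvdAll π (N + 1) f

/-- `G` is a Gröbner basis of the ideal `I` of the (integral) Tate algebra. -/
def IsGB (π : O) (mo : MonomialOrder (Fin n)) (G : Set (TateAlgebra n O π))
    (I : Ideal (TateAlgebra n O π)) : Prop :=
  (∀ g ∈ G, g ∈ I) ∧
    ∀ f ∈ I, (f : MvPowerSeries (Fin n) O) ≠ 0 → ∀ mf,
      IsLM π mo (f : MvPowerSeries (Fin n) O) mf →
        ∃ g ∈ G, ∃ mg, IsLM π mo (g : MvPowerSeries (Fin n) O) mg ∧ monDvd mg mf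

/-- The module `M = {(u,v) : u f - v ∈ I₀}`. -/
def SigMod {π : O} (I0 : Ideal (TateAlgebra n O π)) (f : TateAlgebra n O π) :
    Set (TateAlgebra n O π × TateAlgebra n O π) :=
  {p | p.1 * f - p.2 ∈ I0}

/-- `p = (u₁,v₁)` is top-reducible by `q = (u₂,v₂)`. -/
def TopRed (π : O) (mo : MonomialOrder (Fin n))
    (p q : TateAlgebra n O π × TateAlgebra n O π) : Prop :=
  (q.2 = 0 ∧ ∃ mu mq, IsLM π mo (p.1 : MvPowerSeries (Fin n) O) mu ∧
      IsLM π mo (q.1 : MvPowerSeries (Fin n) O) mq ∧ monDvd mq mu)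
  ∨ (p.2 ≠ 0 ∧ q.2 ≠ 0 ∧
      ∃ m1 m2, IsLM π mo (p.2 : MvPowerSeries (Fin n) O) m1 ∧
        IsLM π mo (q.2 : MvPowerSeries (Fin n) O) m2 ∧ monDvd m2 m1 ∧
        ∃ s1 s2, IsLMopt π mo (p.1 : MvPowerSeries (Fin n) O) s1 ∧
          IsLMopt π mo (q.1 : MvPowerSeries (Fin n) O) s2 ∧
          optLE mo (optMul (monDiv m1 m2) s2) s1)

/-- `G` is a strong Gröbner basis of the module `M = SigMod I0 f`. -/
def IsSGB (π : O) (mo : MonomialOrder (Fin n)) (I0 : Ideal (TateAlgebra n O π))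
    (f : TateAlgebra n O π) (G : Set (TateAlgebra n O π × TateAlgebra n O π)) : Prop :=
  G.Finite ∧ G ⊆ SigMod I0 f ∧
    ∀ p ∈ SigMod I0 f, p ≠ 0 → ∃ q ∈ G, TopRed π mo p q

/-- `p` is covered by `q`. -/
def Covers (π : O) (mo : MonomialOrder (Fin n))
    (q p : TateAlgebra n O π × TateAlgebra n O π) : Prop :=
  ∃ mu mq, IsLM π mo (p.1 : MvPowerSeries (Fin n) O) mu ∧
    IsLM π mo (q.1 : MvPowerSeries (Fin n) O) mq ∧ monDvd mq mu ∧
    ∃ sv sp, IsLMopt π mo (q.2 : MvPowerSeries (Fin n) O) sv ∧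
      IsLMopt π mo (p.2 : MvPowerSeries (Fin n) O) sp ∧
      optLT mo (optMul (monDiv mu mq) sv) sp

def CoveredBy (π : O) (mo : MonomialOrder (Fin n))
    (p : TateAlgebra n O π × TateAlgebra n O π)
    (G : Set (TateAlgebra n O π × TateAlgebra n O π)) : Prop :=
  ∃ q ∈ G, Covers π mo q p

/-- The Tate series `π^a X^i`, as an element of the Tate algebra. -/
noncomputable def monTA (π : O) (m : TMon n) : TateAlgebra n O π :=
  ⟨MvPowerSeries.monomial m.2 (π ^ m.1), by
    intro N
    apply Set.Finite.subset (Set.finite_singleton m.2)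
    intro i hi
    by_contra h
    rw [Set.mem_singleton_iff] at h
    apply hi
    rw [MvPowerSeries.coeff_monomial, if_neg h]
    exact Dvd.intro 0 (by simp)⟩

noncomputable def smulPair (π : O) (m : TMon n) (p : TateAlgebra n O π × TateAlgebra n O π) :
    TateAlgebra n O π × TateAlgebra n O π :=
  (monTA π m * p.1, monTA π m * p.2)

/-- `r` is the J-pair of `(p, q)` (with `p` carrying the larger signature part). -/
def IsJPair (π : O) (mo : MonomialOrder (Fin n))
    (p q r : TateAlgebra n O π × TateAlgebra n O π) : Prop :=
  ∃ m1 m2, IsLM π mo (p.2 : MvPowerSeries (Fin n) O) m1 ∧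
    IsLM π mo (q.2 : MvPowerSeries (Fin n) O) m2 ∧
    (∃ s1 s2, IsLMopt π mo (p.1 : MvPowerSeries (Fin n) O) s1 ∧
      IsLMopt π mo (q.1 : MvPowerSeries (Fin n) O) s2 ∧
      optLT mo (optMul (monDiv (monLcm m1 m2) m2) s2)
        (optMul (monDiv (monLcm m1 m2) m1) s1)) ∧
    r = smulPair π (monDiv (monLcm m1 m2) m1) p

section Residue

variable {k : Type*} [Field k]

/-- `P = ρ(f)`, the reduction mod `π` of `π^{-val f} f`. -/
def IsRho (π : O) (φ : O →+* k) (f : MvPowerSeries (Fin n) O)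
    (P : MvPolynomial (Fin n) k) : Prop :=
  ∃ (N : ℕ) (g : MvPowerSeries (Fin n) O), f = (π ^ N) • g ∧
    (∃ i, ¬ π ∣ MvPowerSeries.coeff i g) ∧
    ∀ i, MvPolynomial.coeff i P = φ (MvPowerSeries.coeff i g)

def rhoSet (π : O) (φ : O →+* k) (S : Set (TateAlgebra n O π)) :
    Set (MvPolynomial (Fin n) k) :=
  {P | ∃ f ∈ S, IsRho π φ (f : MvPowerSeries (Fin n) O) P}

/-- `Ī_N`: the image in `k[X]` of `π^{-N} (I ∩ π^N K{X}°)`. -/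
def BarIdeal (π : O) (φ : O →+* k) (I : Ideal (TateAlgebra n O π)) (N : ℕ) :
    Set (MvPolynomial (Fin n) k) :=
  {P | ∃ f ∈ I, ∃ g : MvPowerSeries (Fin n) O, (f : MvPowerSeries (Fin n) O) = (π ^ N) • g ∧
    ∀ i, MvPolynomial.coeff i P = φ (MvPowerSeries.coeff i g)}

/-- `d` is the leading exponent of the polynomial `P` for the monomial order `mo`. -/
def IsPolyLM (mo : MonomialOrder (Fin n)) (P : MvPolynomial (Fin n) k)
    (d : Fin n →₀ ℕ) : Prop :=
  MvPolynomial.coeff d P ≠ 0 ∧ ∀ e, MvPolynomial.coeff e P ≠ 0 → mo.toSyn e ≤ mo.toSyn d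

/-- `G` is a Gröbner basis of the set (ideal) `J` of polynomials over the residue field. -/
def IsPolyGB (mo : MonomialOrder (Fin n)) (G : Set (MvPolynomial (Fin n) k))
    (J : Set (MvPolynomial (Fin n) k)) : Prop :=
  G ⊆ J ∧ ∀ P ∈ J, P ≠ 0 → ∀ d, IsPolyLM mo P d →
    ∃ Q ∈ G, ∃ e, IsPolyLM mo Q e ∧ e ≤ d

end Residue

end TateStmt


open TateStmt MvPowerSeries

variable {n : ℕ} {O : Type*} [CommRing O] [IsDomain O] [IsDiscreteValuationRing O]

/-- The set `W` of nonzero pairs of `M = {(u,v) : u f - v ∈ I₀}` that are top-reducible by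
no element of `G`. -/
def WSet (π : O) (mo : MonomialOrder (Fin n)) (I0 : Ideal (TateAlgebra n O π))
    (f : TateAlgebra n O π) (G : Set (TateAlgebra n O π × TateAlgebra n O π)) :
    Set (TateAlgebra n O π × TateAlgebra n O π) :=
  {p | p ∈ SigMod I0 f ∧ p ≠ 0 ∧ ∀ q ∈ G, ¬ TopRed π mo p q}

/-- `W₁`: elements of `W` whose `v`-part has leading monomial of valuation `ν`. -/
def W1Set (π : O) (mo : MonomialOrder (Fin n)) (I0 : Ideal (TateAlgebra n O π))
    (f : TateAlgebra n O π) (G : Set (TateAlgebra n O π × TateAlgebra n O π)) (ν : ℕ) :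
    Set (TateAlgebra n O π × TateAlgebra n O π) :=
  {p ∈ WSet π mo I0 f G | ∃ mv, IsLM π mo (p.2 : MvPowerSeries (Fin n) O) mv ∧ mv.1 = ν}

/-- `W₂`: elements of `W₁` whose `u`-part has minimal leading monomial. -/
def W2Set (π : O) (mo : MonomialOrder (Fin n)) (I0 : Ideal (TateAlgebra n O π))
    (f : TateAlgebra n O π) (G : Set (TateAlgebra n O π × TateAlgebra n O π)) (ν : ℕ) :
    Set (TateAlgebra n O π × TateAlgebra n O π) :=
  {p ∈ W1Set π mo I0 f G ν | ∃ s, IsLMopt π mo (p.1 : MvPowerSeries (Fin n) O) s ∧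
    ∀ q ∈ W1Set π mo I0 f G ν, ∀ s',
      IsLMopt π mo (q.1 : MvPowerSeries (Fin n) O) s' → optLE mo s s'}

namespace TateStmt

section TermOrder

variable {mo : MonomialOrder (Fin n)}

noncomputable def termKey (mo : MonomialOrder (Fin n)) (a : TMon n) : ℕᵒᵈ ×ₗ mo.syn :=
  toLex (OrderDual.toDual a.1, mo.toSyn a.2)

theorem termKey_injective : Function.Injective (termKey (n := n) mo) := by
  intro a b h
  simp only [termKey, Prod.mk.injEq, EmbeddingLike.apply_eq_iff_eq] at h
  exact Prod.ext h.1 h.2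

theorem termLT_iff_termKey_lt {a b : TMon n} :
    termLT mo a b ↔ termKey mo a < termKey mo b := by
  simp [termLT, termKey, Prod.Lex.lt_iff]

theorem termLE_iff_termKey_le {a b : TMon n} :
    termLE mo a b ↔ termKey mo a ≤ termKey mo b := by
  rw [termLE, termLT_iff_termKey_lt, le_iff_eq_or_lt, termKey_injective.eq_iff]

theorem termLT_irrefl (a : TMon n) : ¬ termLT mo a a := by
  rw [termLT_iff_termKey_lt]
  exact lt_irrefl _

theorem termLT_trans {a b c : TMon n} (hab : termLT mo a b) (hbc : termLT mo b c) :
    termLT mo a c := by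
  rw [termLT_iff_termKey_lt] at *
  exact hab.trans hbc

theorem termLT_trichotomy (a b : TMon n) : termLT mo a b ∨ a = b ∨ termLT mo b a := by
  simp only [termLT_iff_termKey_lt, ← termKey_injective.eq_iff (f := termKey mo)]
  exact lt_trichotomy _ _

theorem termLE_antisymm {a b : TMon n} (hab : termLE mo a b) (hba : termLE mo b a) : a = b :=
  termKey_injective (le_antisymm (termLE_iff_termKey_le.mp hab) (termLE_iff_termKey_le.mp hba))

theorem optLE_none (s : Option (TMon n)) : optLE mo none s := by
  cases s
  · exact Or.inl rfl
  · exact Or.inr trivial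

theorem optLE_some_of_optLE_some_of_termLT {s : Option (TMon n)} {m m' : TMon n}
    (h : optLE mo s (some m)) (hlt : termLT mo m m') : optLE mo s (some m') := by
  rcases s with _ | a
  · exact optLE_none _
  rcases h with h | h
  · cases h
    exact Or.inr hlt
  · exact Or.inr (termLT_trans h hlt)

theorem not_optLE_some_of_termLT {m m' : TMon n} (hlt : termLT mo m m') :
    ¬ optLE mo (some m') (some m) := by
  rintro (h | h)
  · cases h
    exact termLT_irrefl _ hlt
  · exact termLT_irrefl _ (termLT_trans h hlt)

theorem wellFounded_termLT_of_fst_le (N : ℕ) :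
    WellFounded (fun a b : TMon n => a.1 ≤ N ∧ termLT mo a b) := by
  refine Subrelation.wf ?_ (InvImage.wf (fun a : TMon n => (N - a.1, mo.toSyn a.2))
    (WellFounded.prod_lex wellFounded_lt wellFounded_lt))
  rintro a b ⟨ha, hab | ⟨heq, hlt⟩⟩
  · exact Prod.Lex.left _ _ (by omega)
  · simp only [InvImage, heq]
    exact Prod.Lex.right _ hlt

end TermOrder

section Coefficients

variable {R : Type*} [CommRing R] {π : R} {mo : MonomialOrder (Fin n)}
  {F H : MvPowerSeries (Fin n) R} {m m' : TMon n}

/-- Every term of `F` is smaller than `m` for `termLT`. -/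
def TermsLT (π : R) (mo : MonomialOrder (Fin n)) (F : MvPowerSeries (Fin n) R) (m : TMon n) :
    Prop :=
  DvdAll π m.1 F ∧ ∀ i, mo.toSyn m.2 ≤ mo.toSyn i → π ^ (m.1 + 1) ∣ coeff i F

theorem IsTerm.ne_zero (h : IsTerm π F m) : F ≠ 0 := by
  rintro rfl
  exact h.2 (by simp)

theorem exists_isTerm_of_not_dvd {N : ℕ} {i : Fin n →₀ ℕ} (h : ¬ π ^ N ∣ coeff i F) :
    ∃ a < N, IsTerm π F (a, i) := by
  classical
  set a := Nat.findGreatest (fun a => π ^ a ∣ coeff i F) N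
  have ha : π ^ a ∣ coeff i F :=
    Nat.findGreatest_spec (P := fun a => π ^ a ∣ coeff i F) (Nat.zero_le N) (by simp)
  have haN : a < N := (Nat.findGreatest_le N).lt_of_ne fun h' => h (h' ▸ ha)
  exact ⟨a, haN, ha, Nat.findGreatest_is_greatest (Nat.lt_succ_self a) haN⟩

theorem IsLM.dvdAll (h : IsLM π mo F m) : DvdAll π m.1 F := by
  intro i
  by_contra hi
  obtain ⟨a, ha, hterm⟩ := exists_isTerm_of_not_dvd hi
  rcases h.2 _ hterm with he | hlt | ⟨he, -⟩
  · exact ha.ne (congrArg Prod.fst he)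
  · simp only at hlt
    omega
  · exact ha.ne he

theorem IsLM.coeff_dvd_succ (h : IsLM π mo F m) {i : Fin n →₀ ℕ}
    (hi : mo.toSyn m.2 < mo.toSyn i) : π ^ (m.1 + 1) ∣ coeff i F := by
  by_contra hc
  obtain ⟨a, ha, hterm⟩ := exists_isTerm_of_not_dvd hc
  rcases h.2 _ hterm with he | hlt | ⟨-, hlt⟩
  · cases he
    exact lt_irrefl _ hi
  · simp only at hlt
    omega
  · exact lt_asymm hi hlt

theorem isLM_of_coeffs (hm : ¬ π ^ (m.1 + 1) ∣ coeff m.2 F) (hdvd : DvdAll π m.1 F)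
    (hgt : ∀ i, mo.toSyn m.2 < mo.toSyn i → π ^ (m.1 + 1) ∣ coeff i F) : IsLM π mo F m := by
  refine ⟨⟨hdvd m.2, hm⟩, ?_⟩
  rintro ⟨a, i⟩ ⟨-, ha⟩
  have hma : m.1 ≤ a := by
    by_contra! h
    exact ha ((pow_dvd_pow π h).trans (hdvd i))
  rcases hma.lt_or_eq with hlt | rfl
  · exact Or.inr (Or.inl hlt)
  rcases lt_trichotomy (mo.toSyn i) (mo.toSyn m.2) with hi | hi | hi
  · exact Or.inr (Or.inr ⟨rfl, hi⟩)
  · exact Or.inl (Prod.ext rfl (mo.toSyn.injective hi))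
  · exact absurd (hgt i hi) ha

theorem IsLM.unique (h : IsLM π mo F m) (h' : IsLM π mo F m') : m = m' :=
  termLE_antisymm (h'.2 m h.1) (h.2 m' h'.1)

theorem IsLMopt.eq_some {s : Option (TMon n)} (hs : IsLMopt π mo F s) (h : IsLM π mo F m) :
    s = some m := by
  cases s with
  | none => exact absurd hs h.1.ne_zero
  | some m' => exact congrArg some (IsLM.unique hs h)

theorem IsLM.congr_isTerm (h : IsLM π mo F m) (hFH : ∀ m, IsTerm π H m ↔ IsTerm π F m) :
    IsLM π mo H m :=
  ⟨(hFH m).2 h.1, fun m' hm' => h.2 m' ((hFH m').1 hm')⟩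

theorem IsLM.neg (h : IsLM π mo F m) : IsLM π mo (-F) m :=
  h.congr_isTerm fun _ => by simp only [IsTerm, map_neg, dvd_neg]

theorem IsLM.C_mul {c : R} (hc : IsUnit c) (h : IsLM π mo F m) : IsLM π mo (C c * F) m :=
  h.congr_isTerm fun _ => by simp only [IsTerm, coeff_C_mul, hc.dvd_mul_left]

theorem TermsLT.neg (h : TermsLT π mo F m) : TermsLT π mo (-F) m :=
  ⟨fun i => by simpa only [map_neg, dvd_neg] using h.1 i,
    fun i hi => by simpa only [map_neg, dvd_neg] using h.2 i hi⟩

theorem TermsLT.termLT_of_isTerm (h : TermsLT π mo F m) (ht : IsTerm π F m') :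
    termLT mo m' m := by
  have hle : m.1 ≤ m'.1 := by
    by_contra! hlt
    exact ht.2 ((pow_dvd_pow π hlt).trans (h.1 m'.2))
  rcases hle.lt_or_eq with hlt | heq
  · exact Or.inl hlt
  · refine Or.inr ⟨heq.symm, lt_of_not_ge fun hge => ht.2 ?_⟩
    rw [← heq]
    exact h.2 _ hge

theorem TermsLT.mono (h : TermsLT π mo F m) (hlt : termLT mo m m') : TermsLT π mo F m' := by
  rcases hlt with hlt | ⟨heq, hlt⟩
  · exact ⟨fun i => (pow_dvd_pow π hlt.le).trans (h.1 i),
      fun i _ => (pow_dvd_pow π hlt).trans (h.1 i)⟩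
  · exact ⟨fun i => heq ▸ h.1 i, fun i hi => heq ▸ h.2 i (hlt.le.trans hi)⟩

theorem IsLM.termsLT (h : IsLM π mo F m) (hlt : termLT mo m m') : TermsLT π mo F m' := by
  rcases hlt with hlt | ⟨heq, hlt⟩
  · exact ⟨fun i => (pow_dvd_pow π hlt.le).trans (h.dvdAll i),
      fun i _ => (pow_dvd_pow π hlt).trans (h.dvdAll i)⟩
  · exact ⟨heq ▸ h.dvdAll, fun i hi => heq ▸ h.coeff_dvd_succ (hlt.trans_le hi)⟩

theorem termsLT_of_dvdAll (h : DvdAll π (m.1 + 1) F) : TermsLT π mo F m :=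
  ⟨fun i => (pow_dvd_pow π m.1.le_succ).trans (h i), fun i _ => h i⟩

theorem IsLM.add_termsLT (hF : IsLM π mo F m) (hH : TermsLT π mo H m) :
    IsLM π mo (F + H) m := by
  refine isLM_of_coeffs ?_ (fun i => ?_) (fun i hi => ?_) <;> rw [map_add]
  · rw [dvd_add_left (hH.2 _ le_rfl)]
    exact hF.1.2
  · exact dvd_add (hF.dvdAll i) (hH.1 i)
  · exact dvd_add (hF.coeff_dvd_succ hi) (hH.2 i hi.le)

theorem IsLM.sub_termsLT (hF : IsLM π mo F m) (hH : TermsLT π mo H m) :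
    IsLM π mo (F - H) m := by
  simpa only [sub_eq_add_neg] using hF.add_termsLT hH.neg

theorem TermsLT.sub_isLM (hF : TermsLT π mo F m) (hH : IsLM π mo H m) :
    IsLM π mo (F - H) m := by
  simpa only [neg_add_eq_sub] using hH.neg.add_termsLT hF

theorem DvdAll.mul_right {N : ℕ} (h : DvdAll π N F) (H : MvPowerSeries (Fin n) R) :
    DvdAll π N (F * H) := fun i => by
  rw [coeff_mul]
  exact Finset.dvd_sum fun p _ => dvd_mul_of_dvd_left (h p.1) _

end Coefficients

section Domain

variable {R : Type*} [CommRing R] [IsDomain R] {π : R} {mo : MonomialOrder (Fin n)}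
  {H : MvPowerSeries (Fin n) R} {m : TMon n}

theorem IsLM.monomial_mul (hπ : π ≠ 0) (h : IsLM π mo H m) (t : TMon n) :
    IsLM π mo (monomial t.2 (π ^ t.1) * H) (monMul t m) := by
  obtain ⟨e, d⟩ := t
  refine isLM_of_coeffs ?_ (fun i => ?_) (fun i hi => ?_) <;> dsimp only [monMul] at *
  · rw [coeff_monomial_mul, if_pos le_self_add, add_tsub_cancel_left, add_assoc, pow_add,
      mul_dvd_mul_iff_left (pow_ne_zero e hπ)]
    exact h.1.2
  · rw [coeff_monomial_mul]
    split_ifs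
    · rw [pow_add]
      exact mul_dvd_mul_left _ (h.dvdAll _)
    · exact dvd_zero _
  · rw [coeff_monomial_mul]
    split_ifs with hdi
    · have hlt : mo.toSyn m.2 < mo.toSyn (i - d) := by
        rwa [← add_lt_add_iff_left (mo.toSyn d), ← map_add, ← map_add,
          add_tsub_cancel_of_le hdi]
      rw [add_assoc, pow_add]
      exact mul_dvd_mul_left _ (h.coeff_dvd_succ hlt)
    · exact dvd_zero _

end Domain

section DVR

variable {R : Type*} [CommRing R] [IsDomain R] [IsDiscreteValuationRing R] {π : R}
  {mo : MonomialOrder (Fin n)} {F H : MvPowerSeries (Fin n) R} {m : TMon n}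

theorem IsTerm.exists_isUnit (hπ : Irreducible π) (h : IsTerm π F m) :
    ∃ α, IsUnit α ∧ coeff m.2 F = π ^ m.1 * α := by
  obtain ⟨α, hα⟩ := h.1
  refine ⟨α, IsLocalRing.notMem_maximalIdeal.mp fun hmem => h.2 ?_, hα⟩
  rw [hπ.maximalIdeal_eq, Ideal.mem_span_singleton] at hmem
  rw [hα, pow_succ]
  exact mul_dvd_mul_left _ hmem

theorem exists_isUnit_termsLT_sub_C_mul (hπ : Irreducible π) (hF : IsLM π mo F m)
    (hH : IsLM π mo H m) : ∃ c, IsUnit c ∧ TermsLT π mo (F - C c * H) m := by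
  obtain ⟨α, hα, hαF⟩ := hF.1.exists_isUnit hπ
  obtain ⟨β, hβ, hβH⟩ := hH.1.exists_isUnit hπ
  refine ⟨α * ↑hβ.unit⁻¹, hα.mul (Units.isUnit _), fun i => ?_, fun i hi => ?_⟩
  · rw [map_sub, coeff_C_mul]
    exact dvd_sub (hF.dvdAll i) (dvd_mul_of_dvd_right (hH.dvdAll i) _)
  rw [map_sub, coeff_C_mul]
  rcases hi.eq_or_lt with heq | hlt
  · rw [← mo.toSyn.injective heq, hαF, hβH]
    have hβ' : (↑hβ.unit⁻¹ : R) * β = 1 := hβ.val_inv_mul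
    rw [show π ^ m.1 * α - α * ↑hβ.unit⁻¹ * (π ^ m.1 * β) = 0 by
      linear_combination (-(π ^ m.1 * α)) * hβ']
    exact dvd_zero _
  · exact dvd_sub (hF.coeff_dvd_succ hlt) (dvd_mul_of_dvd_right (hH.coeff_dvd_succ hlt) _)

theorem exists_isLM (hπ : Irreducible π) (hF : IsTate π F) (hF0 : F ≠ 0) :
    ∃ m, IsLM π mo F m := by
  classical
  obtain ⟨i₀, hi₀⟩ : ∃ i, coeff i F ≠ 0 := by
    by_contra! h
    exact hF0 (MvPowerSeries.ext h)
  have hex : ∃ a, ¬ DvdAll π (a + 1) F := by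
    obtain ⟨a, ha⟩ := FiniteMultiplicity.of_not_isUnit hπ.not_isUnit hi₀
    exact ⟨a, fun h => ha (h i₀)⟩
  set a := Nat.find hex
  have ha : DvdAll π a F := by
    rcases Nat.eq_zero_or_eq_succ_pred a with h0 | hsucc
    · rw [h0]
      exact fun i => by simp
    · rw [hsucc]
      exact not_not.mp (Nat.find_min hex (by omega))
  -- by the Tate condition only finitely many coefficients have valuation `a`
  obtain ⟨i, hi, himax⟩ := Set.exists_max_image _ mo.toSyn (hF (a + 1))
    (not_forall.mp (Nat.find_spec hex))
  exact ⟨(a, i), isLM_of_coeffs hi ha fun j hj =>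
    not_not.mp fun hj' => (himax j hj').not_gt hj⟩

theorem exists_isLM_or_dvdAll (hπ : Irreducible π) (hF : IsTate π F) (N : ℕ) :
    DvdAll π N F ∨ ∃ m, IsLM π mo F m ∧ m.1 < N := by
  by_cases hF0 : F = 0
  · exact Or.inl fun i => by simp [hF0]
  obtain ⟨m, hm⟩ := exists_isLM hπ hF hF0
  by_cases hmN : m.1 < N
  · exact Or.inr ⟨m, hm, hmN⟩
  · exact Or.inl fun i => (pow_dvd_pow π (not_lt.mp hmN)).trans (hm.dvdAll i)

end DVR

theorem monomial_mem_tateAlgebra {R : Type*} [CommRing R] {π : R} (d : Fin n →₀ ℕ) (a : R) :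
    monomial d a ∈ TateAlgebra n R π := fun N =>
  (Set.finite_singleton d).subset fun i hi => by
    by_contra h
    exact hi (by rw [coeff_monomial, if_neg (Set.mem_singleton_iff.not.mp h)]; exact dvd_zero _)

theorem C_mem_tateAlgebra {R : Type*} [CommRing R] {π : R} (c : R) :
    C c ∈ TateAlgebra n R π := by
  rw [← monomial_zero_eq_C_apply]
  exact monomial_mem_tateAlgebra 0 c

noncomputable def constTA {R : Type*} [CommRing R] (π : R) (c : R) : TateAlgebra n R π :=
  ⟨C c, C_mem_tateAlgebra c⟩

section Signature

variable {R : Type*} [CommRing R] {π : R} {mo : MonomialOrder (Fin n)}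
  {I0 : Ideal (TateAlgebra n R π)} {f : TateAlgebra n R π}
  {G : Set (TateAlgebra n R π × TateAlgebra n R π)}
  {p q pA pB : TateAlgebra n R π × TateAlgebra n R π} {u w : TateAlgebra n R π}
  {m ms mA mB : TMon n} {ν : ℕ}

theorem ne_zero_of_isLM_coe {F : TateAlgebra n R π}
    (h : IsLM π mo (F : MvPowerSeries (Fin n) R) m) : F ≠ 0 := by
  rintro rfl
  exact h.1.ne_zero rfl

theorem sub_mul_mem_sigMod (hp : p ∈ SigMod I0 f) (hq : q ∈ SigMod I0 f)
    (t : TateAlgebra n R π) : (p.1 - t * q.1, p.2 - t * q.2) ∈ SigMod I0 f := by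
  show (p.1 - t * q.1) * f - (p.2 - t * q.2) ∈ I0
  rw [show (p.1 - t * q.1) * f - (p.2 - t * q.2) = (p.1 * f - p.2) - t * (q.1 * f - q.2) by ring]
  exact I0.sub_mem hp (I0.mul_mem_left _ hq)

theorem exists_topRed_of_isLM_mem
    (hG0 : IsGB π mo {g : TateAlgebra n R π | ((0 : TateAlgebra n R π), g) ∈ G} I0)
    {s : Option (TMon n)} (hv : IsLM π mo (p.2 : MvPowerSeries (Fin n) R) m)
    (hs : IsLMopt π mo (p.1 : MvPowerSeries (Fin n) R) s) {g : TateAlgebra n R π}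
    (hg : g ∈ I0) (hgv : IsLM π mo (g : MvPowerSeries (Fin n) R) m) :
    ∃ q ∈ G, TopRed π mo p q := by
  obtain ⟨g', hg', mg, hmg, hdvd⟩ := hG0.2 g hg hgv.1.ne_zero m hgv
  exact ⟨(0, g'), hg', Or.inr ⟨ne_zero_of_isLM_coe hv, ne_zero_of_isLM_coe hmg, m, mg, hv, hmg,
    hdvd, s, none, hs, rfl, optLE_none s⟩⟩

theorem fst_ne_zero_of_mem_WSet
    (hG0 : IsGB π mo {g : TateAlgebra n R π | ((0 : TateAlgebra n R π), g) ∈ G} I0)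
    (hp : p ∈ WSet π mo I0 f G) (hv : IsLM π mo (p.2 : MvPowerSeries (Fin n) R) m) :
    (p.1 : MvPowerSeries (Fin n) R) ≠ 0 := by
  intro h0
  have hI : p.2 ∈ I0 := by
    simpa [show p.1 = 0 from Subtype.ext h0] using I0.neg_mem hp.1
  obtain ⟨q, hq, hred⟩ := exists_topRed_of_isLM_mem hG0 hv (s := none) h0 hI hv
  exact hp.2.2 q hq hred

theorem notMem_W1Set_of_termLT (hB : pB ∈ W2Set π mo I0 f G ν)
    (hB1 : IsLM π mo (pB.1 : MvPowerSeries (Fin n) R) ms)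
    (hq : IsLM π mo (q.1 : MvPowerSeries (Fin n) R) m) (hlt : termLT mo m ms) :
    q ∉ W1Set π mo I0 f G ν := by
  intro hqW
  obtain ⟨-, s, hs, hmin⟩ := hB
  obtain rfl := hs.eq_some hB1
  exact not_optLE_some_of_termLT hlt (hmin q hqW (some m) hq)

theorem false_of_dvdAll
    (hG0 : IsGB π mo {g : TateAlgebra n R π | ((0 : TateAlgebra n R π), g) ∈ G} I0)
    (hB : pB ∈ WSet π mo I0 f G) (hB1 : IsLM π mo (pB.1 : MvPowerSeries (Fin n) R) ms)
    (hB2 : IsLM π mo (pB.2 : MvPowerSeries (Fin n) R) mB)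
    (hw : IsLM π mo (w : MvPowerSeries (Fin n) R) mB) (hI : (u, w) ∈ SigMod I0 f)
    (hu : DvdAll π (mB.1 + 1) (u : MvPowerSeries (Fin n) R)) : False := by
  have hI' : w - u * f ∈ I0 := by simpa using I0.neg_mem hI
  have hLM : IsLM π mo ((w - u * f : TateAlgebra n R π) : MvPowerSeries (Fin n) R) mB :=
    hw.sub_termsLT (termsLT_of_dvdAll (hu.mul_right _))
  obtain ⟨q, hq, hred⟩ := exists_topRed_of_isLM_mem hG0 hB2 (s := some ms) hB1 hI' hLM
  exact hB.2.2 q hq hred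

variable [IsDomain R] [IsDiscreteValuationRing R]

theorem exists_termsLT_sub_mul (hπ : Irreducible π) {H : TateAlgebra n R π} {mh : TMon n}
    (hu : IsLM π mo (u : MvPowerSeries (Fin n) R) m)
    (hH : IsLM π mo (H : MvPowerSeries (Fin n) R) mh) (hdvd : monDvd mh m) :
    ∃ t : TateAlgebra n R π, TermsLT π mo ((u - t * H : TateAlgebra n R π) :
      MvPowerSeries (Fin n) R) m := by
  have hmul : monMul (monDiv m mh) mh = m :=
    Prod.ext (Nat.sub_add_cancel hdvd.1) (tsub_add_cancel_of_le hdvd.2)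
  have htH : IsLM π mo ((monTA π (monDiv m mh) * H : TateAlgebra n R π) :
      MvPowerSeries (Fin n) R) m := by
    have h := hH.monomial_mul hπ.ne_zero (monDiv m mh)
    rw [hmul] at h
    exact h
  obtain ⟨c, -, hc⟩ := exists_isUnit_termsLT_sub_C_mul hπ hu htH
  refine ⟨constTA π c * monTA π (monDiv m mh), ?_⟩
  rw [mul_assoc]
  exact hc

theorem exists_fst_reduction (hπ : Irreducible π) (hGM : G ⊆ SigMod I0 f)
    (hB : pB ∈ W2Set π mo I0 f G ν) (hB1 : IsLM π mo (pB.1 : MvPowerSeries (Fin n) R) ms)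
    (hB2 : IsLM π mo (pB.2 : MvPowerSeries (Fin n) R) mB) (hmB : mB.1 = ν)
    (hw : IsLM π mo (w : MvPowerSeries (Fin n) R) mB) (hI : (u, w) ∈ SigMod I0 f)
    (hu : IsLM π mo (u : MvPowerSeries (Fin n) R) m) (hlt : termLT mo m ms) :
    ∃ u' : TateAlgebra n R π,
      (u', w) ∈ SigMod I0 f ∧ TermsLT π mo (u' : MvPowerSeries (Fin n) R) m := by
  obtain ⟨q, hq, hred⟩ : ∃ q ∈ G, TopRed π mo (u, w) q := by
    by_contra hirr
    exact notMem_W1Set_of_termLT hB hB1 hu hlt ⟨⟨hI, fun h => ne_zero_of_isLM_coe hw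
      (congrArg Prod.snd h), fun q hq hred => hirr ⟨q, hq, hred⟩⟩, mB, hw, hmB⟩
  rcases hred with ⟨hq2, mu, mq, hmu, hmq, hdvd⟩ |
    ⟨-, hq2, mv, mq, hmv, hmq, hdvd, s, s', hs, hs', hle⟩
  · obtain rfl := hmu.unique hu
    obtain ⟨t, ht⟩ := exists_termsLT_sub_mul hπ hu hmq hdvd
    exact ⟨u - t * q.1, by simpa [hq2] using sub_mul_mem_sigMod hI (hGM hq) t, ht⟩
  · -- the same reduction applies to `pB`, whose `u`-part has the larger leading monomial
    obtain rfl := hmv.unique hw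
    obtain rfl := hs.eq_some hu
    exact absurd (Or.inr ⟨ne_zero_of_isLM_coe hB2, hq2, mv, mq, hB2, hmq, hdvd, some ms, s', hB1,
      hs', optLE_some_of_optLE_some_of_termLT hle hlt⟩) (hB.1.1.2.2 q hq)

theorem notMem_sigMod_of_termsLT (hπ : Irreducible π) (hGM : G ⊆ SigMod I0 f)
    (hG0 : IsGB π mo {g : TateAlgebra n R π | ((0 : TateAlgebra n R π), g) ∈ G} I0)
    (hB : pB ∈ W2Set π mo I0 f G ν) (hB1 : IsLM π mo (pB.1 : MvPowerSeries (Fin n) R) ms)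
    (hB2 : IsLM π mo (pB.2 : MvPowerSeries (Fin n) R) mB) (hmB : mB.1 = ν)
    (hw : IsLM π mo (w : MvPowerSeries (Fin n) R) mB)
    (hu : TermsLT π mo (u : MvPowerSeries (Fin n) R) ms) : (u, w) ∉ SigMod I0 f := by
  intro hI
  have base (u : TateAlgebra n R π) (hI : (u, w) ∈ SigMod I0 f)
      (hdvd : DvdAll π (mB.1 + 1) (u : MvPowerSeries (Fin n) R)) : False :=
    false_of_dvdAll hG0 hB.1.1 hB1 hB2 hw hI hdvd
  rcases exists_isLM_or_dvdAll (mo := mo) hπ u.2 (mB.1 + 1) with hdvd | ⟨m, hm, hmν⟩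
  · exact base u hI hdvd
  induction m using (wellFounded_termLT_of_fst_le (mo := mo) mB.1).induction generalizing u with
  | _ m ih =>
    have hlt := hu.termLT_of_isTerm hm.1
    obtain ⟨u', hI', hu'⟩ := exists_fst_reduction hπ hGM hB hB1 hB2 hmB hw hI hm hlt
    rcases exists_isLM_or_dvdAll (mo := mo) hπ u'.2 (mB.1 + 1) with hdvd | ⟨m', hm', hm'ν⟩
    · exact base u' hI' hdvd
    · exact ih m' ⟨by omega, hu'.termLT_of_isTerm hm'.1⟩ (hu'.mono hlt) hI' hm' hm'ν

theorem false_of_termLT_snd (hπ : Irreducible π) (hGM : G ⊆ SigMod I0 f)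
    (hG0 : IsGB π mo {g : TateAlgebra n R π | ((0 : TateAlgebra n R π), g) ∈ G} I0)
    (hA : pA ∈ SigMod I0 f) (hB : pB ∈ W2Set π mo I0 f G ν)
    (hA1 : IsLM π mo (pA.1 : MvPowerSeries (Fin n) R) ms)
    (hB1 : IsLM π mo (pB.1 : MvPowerSeries (Fin n) R) ms)
    (hA2 : IsLM π mo (pA.2 : MvPowerSeries (Fin n) R) mA)
    (hB2 : IsLM π mo (pB.2 : MvPowerSeries (Fin n) R) mB) (hmB : mB.1 = ν)
    (hlt : termLT mo mA mB) : False := by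
  obtain ⟨c, hc, hcancel⟩ := exists_isUnit_termsLT_sub_C_mul hπ hA1 hB1
  let t : TateAlgebra n R π := constTA π c
  have hw : IsLM π mo ((pA.2 - t * pB.2 : TateAlgebra n R π) : MvPowerSeries (Fin n) R) mB :=
    (hA2.termsLT hlt).sub_isLM (hB2.C_mul hc)
  exact notMem_sigMod_of_termsLT hπ hGM hG0 hB hB1 hB2 hmB hw hcancel
    (sub_mul_mem_sigMod hA hB.1.1.1 t)

end Signature

end TateStmt

theorem statement_11_general (π : O) (hπ : Irreducible π) (mo : MonomialOrder (Fin n))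
    (I0 : Ideal (TateAlgebra n O π)) (f : TateAlgebra n O π)
    (G : Set (TateAlgebra n O π × TateAlgebra n O π))
    (hGM : G ⊆ SigMod I0 f)
    (hG0 : IsGB π mo {g : TateAlgebra n O π | ((0 : TateAlgebra n O π), g) ∈ G} I0)
    (ν : ℕ) :
    ∀ p1 ∈ W2Set π mo I0 f G ν, ∀ p2 ∈ W2Set π mo I0 f G ν, ∀ m1 m2,
      IsLM π mo (p1.2 : MvPowerSeries (Fin n) O) m1 →
      IsLM π mo (p2.2 : MvPowerSeries (Fin n) O) m2 → m1 = m2 := by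
  intro p1 hp1 p2 hp2 m1 m2 hm1 hm2
  obtain ⟨mv1, hmv1, hν1⟩ := hp1.1.2
  obtain ⟨mv2, hmv2, hν2⟩ := hp2.1.2
  obtain rfl := hm1.unique hmv1
  obtain rfl := hm2.unique hmv2
  obtain ⟨ms1, hms1⟩ := exists_isLM (mo := mo) hπ p1.1.2
    (fst_ne_zero_of_mem_WSet hG0 hp1.1.1 hm1)
  obtain ⟨ms2, hms2⟩ := exists_isLM (mo := mo) hπ p2.1.2
    (fst_ne_zero_of_mem_WSet hG0 hp2.1.1 hm2)
  obtain rfl : ms1 = ms2 := by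
    rcases termLT_trichotomy ms1 ms2 with h | h | h
    · exact absurd hp1.1 (notMem_W1Set_of_termLT hp2 hms2 hms1 h)
    · exact h
    · exact absurd hp2.1 (notMem_W1Set_of_termLT hp1 hms1 hms2 h)
  rcases termLT_trichotomy m1 m2 with h | h | h
  · exact (false_of_termLT_snd hπ hGM hG0 hp1.1.1.1 hp2 hms1 hms2 hm1 hm2 hν2 h).elim
  · exact h
  · exact (false_of_termLT_snd hπ hGM hG0 hp2.1.1.1 hp1 hms2 hms1 hm2 hm1 hν1 h).elim

/-- any two elements `(u₁,v₁), (u₂,v₂)` of `W₂` satisfy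
`LM(v₁) = LM(v₂)`. -/
theorem statement_11 (π : O) (hπ : Irreducible π) (mo : MonomialOrder (Fin n))
    (I0 : Ideal (TateAlgebra n O π)) (f : TateAlgebra n O π)
    (G : Set (TateAlgebra n O π × TateAlgebra n O π))
    (hfin : G.Finite) (hGM : G ⊆ SigMod I0 f)
    (h1f : ((1 : TateAlgebra n O π), f) ∈ G)
    (hG0 : IsGB π mo {g : TateAlgebra n O π | ((0 : TateAlgebra n O π), g) ∈ G} I0)
    (ν : ℕ)
    (hν₁ : ∃ p ∈ WSet π mo I0 f G, ValEq π (p.2 : MvPowerSeries (Fin n) O) ν)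
    (hν₂ : ∀ p ∈ WSet π mo I0 f G, ∀ ν',
      ValEq π (p.2 : MvPowerSeries (Fin n) O) ν' → ν ≤ ν') :
    ∀ p1 ∈ W2Set π mo I0 f G ν, ∀ p2 ∈ W2Set π mo I0 f G ν, ∀ m1 m2,
      IsLM π mo (p1.2 : MvPowerSeries (Fin n) O) m1 →
      IsLM π mo (p2.2 : MvPowerSeries (Fin n) O) m2 → m1 = m2 :=
  statement_11_general π hπ mo I0 f G hGM hG0 ν
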